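/- Let H be the k-dimensional hypercube graph on n = 2^k vertices (k ≥ 1): vertices are the elements of {0,1}^k and two vertices are adjacent iff they differ in exactly one coordinate. Then g(H, (2 − k)·𝟙) = n/2, h(H) = n/2, and bw(H) = n/2; in particular h(H) = bw(H). -/

import Mathlib

open Matrix BigOperators Finset

noncomputable section

variable {V : Type*} [Fintype V] [DecidableEq V]

/-- Adjacency matrix of a graph on a finite vertex type, with real entries. -/
def adjA (G : SimpleGraph V) [DecidableRel G.Adj] : Matrix V V ℝ :=
  Matrix.of fun i j => if G.Adj i j then (1 : ℝ) else 0

/-- A bisection vector: entries in `{+1, -1}` summing to zero. -/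
def IsBisection (x : V → ℝ) : Prop :=
  (∀ i, x i = 1 ∨ x i = -1) ∧ ∑ i, x i = 0

/-- Cut width of a `±1` vector: `∑_{{i,j}∈E} (1 - x_i x_j)/2`, written as a sum
over ordered pairs (each edge counted twice, hence the `/4`). -/
def cw (G : SimpleGraph V) [DecidableRel G.Adj] (x : V → ℝ) : ℝ :=
  (∑ i, ∑ j, adjA G i j * (1 - x i * x j)) / 4

/-- Bisection width: minimum cut width over all bisection vectors. -/
def bw (G : SimpleGraph V) [DecidableRel G.Adj] : ℝ :=
  sInf {c | ∃ x : V → ℝ, IsBisection x ∧ cw G x = c}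

/-- `λ_S(B)`: supremum of the Rayleigh quotient of `B` over nonzero vectors of
coordinate sum zero. -/
def lamS (B : Matrix V V ℝ) : ℝ :=
  sSup {r | ∃ x : V → ℝ, x ≠ 0 ∧ ∑ i, x i = 0 ∧
    r = (x ⬝ᵥ B.mulVec x) / (∑ i, (x i) ^ 2)}

/-- Sum of all entries of a matrix. -/
def msum (M : Matrix V V ℝ) : ℝ := ∑ i, ∑ j, M i j

/-- Boppana's function `g(G,d)`. -/
def gB (G : SimpleGraph V) [DecidableRel G.Adj] (d : V → ℝ) : ℝ :=
  (msum (adjA G + Matrix.diagonal d)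
    - (Fintype.card V : ℝ) * lamS (adjA G + Matrix.diagonal d)) / 4

/-- Boppana's lower bound `h(G) = sup_d g(G,d)`. -/
def hB (G : SimpleGraph V) [DecidableRel G.Adj] : ℝ :=
  sSup {r | ∃ d : V → ℝ, r = gB G d}

/-- The `k`-dimensional hypercube graph: vertices are elements of `{0,1}^k`,
adjacent iff they differ in exactly one coordinate. -/
def cube (k : ℕ) : SimpleGraph (Fin k → Bool) where
  Adj x y := (Finset.univ.filter fun i => x i ≠ y i).card = 1
  symm := by
    constructor
    intro x y h
    have hxy : (Finset.univ.filter fun i => y i ≠ x i)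
        = (Finset.univ.filter fun i => x i ≠ y i) := by
      apply Finset.filter_congr
      intro i _
      simp [ne_comm]
    simpa [hxy] using h
  loopless := by
    constructor
    intro x h
    simp at h

instance (k : ℕ) : DecidableRel (cube k).Adj :=
  fun x y =>
    decidable_of_iff ((Finset.univ.filter fun i => x i ≠ y i).card = 1) Iff.rfl


/-!
A bisection vector `x` is itself a test vector for `λ_S`, so
`n · λ_S(A + diag d) ≥ xᵀAx + ∑ d`, which is Boppana's bound `g(G, d) ≤ cw(x)`; hence
`h = g(G, d)` and `bw = cw(x)` as soon as the two agree.

On the hypercube the Walsh characters `χ_S(u) = (-1)^|S ∩ u|` form an orthogonal eigenbasis of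
`A`, with eigenvalue `k - 2|S|` on `χ_S`. Off `χ_∅ = 𝟙` the largest eigenvalue is `k - 2`, so
`λ_S(A + (2 - k)I) = 0` and `g(H, (2 - k)𝟙) = (k 2^k + (2 - k) 2^k) / 4 = 2^k / 2`. A dictator
character `χ_{i}` is a bisection of cut width `(k 2^k - (k - 2) 2^k) / 4 = 2^k / 2`.
-/
section BoppanaBound

variable {ι : Type*} [Fintype ι]

theorem msum_add_diagonal [DecidableEq ι] (M : Matrix ι ι ℝ) (d : ι → ℝ) :
    msum (M + diagonal d) = msum M + ∑ i, d i := by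
  simp [msum, Matrix.diagonal_apply, Finset.sum_add_distrib]

theorem dotProduct_add_diagonal_mulVec [DecidableEq ι] (M : Matrix ι ι ℝ) (d x : ι → ℝ) :
    x ⬝ᵥ (M + diagonal d) *ᵥ x = x ⬝ᵥ M *ᵥ x + ∑ i, d i * x i ^ 2 := by
  rw [add_mulVec, dotProduct_add]
  congr 1
  simp only [dotProduct, mulVec_diagonal]
  exact Finset.sum_congr rfl fun i _ => by ring

theorem dotProduct_mulVec_le_sum_abs_mul (B : Matrix ι ι ℝ) (x : ι → ℝ) :
    x ⬝ᵥ B *ᵥ x ≤ (∑ i, ∑ j, |B i j|) * ∑ i, x i ^ 2 := by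
  set s := ∑ i, x i ^ 2
  have hsq : ∀ i, x i ^ 2 ≤ s := fun i =>
    Finset.single_le_sum (fun j _ => sq_nonneg (x j)) (Finset.mem_univ i)
  have hentry : ∀ i j, x i * (B i j * x j) ≤ |B i j| * s := by
    intro i j
    have hprod : |x i * x j| ≤ s := abs_le.mpr
      ⟨by nlinarith [sq_nonneg (x i + x j), hsq i, hsq j],
        by nlinarith [sq_nonneg (x i - x j), hsq i, hsq j]⟩
    calc x i * (B i j * x j) ≤ |B i j * (x i * x j)| := by
          rw [show x i * (B i j * x j) = B i j * (x i * x j) by ring]; exact le_abs_self _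
      _ ≤ |B i j| * s := by
          rw [abs_mul]; exact mul_le_mul_of_nonneg_left hprod (abs_nonneg _)
  simp only [dotProduct, mulVec, Finset.mul_sum, Finset.sum_mul]
  exact Finset.sum_le_sum fun i _ => Finset.sum_le_sum fun j _ => hentry i j

theorem le_lamS (B : Matrix ι ι ℝ) {x : ι → ℝ} (hx : x ≠ 0) (hsum : ∑ i, x i = 0) :
    (x ⬝ᵥ B *ᵥ x) / ∑ i, x i ^ 2 ≤ lamS B := by
  refine le_csSup ⟨∑ i, ∑ j, |B i j|, ?_⟩ ⟨x, hx, hsum, rfl⟩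
  rintro _ ⟨y, -, -, rfl⟩
  rcases (Finset.sum_nonneg fun i (_ : i ∈ Finset.univ) => sq_nonneg (y i)).eq_or_lt with h | h
  · rw [← h, div_zero]
    exact Finset.sum_nonneg fun i _ => Finset.sum_nonneg fun j _ => abs_nonneg _
  · exact (div_le_iff₀ h).mpr (dotProduct_mulVec_le_sum_abs_mul B y)

theorem lamS_eq_of_forall_le {B : Matrix ι ι ℝ} {m : ℝ}
    (hle : ∀ x : ι → ℝ, ∑ i, x i = 0 → x ⬝ᵥ B *ᵥ x ≤ m * ∑ i, x i ^ 2)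
    {x₀ : ι → ℝ} (hx₀ : x₀ ≠ 0) (hsum : ∑ i, x₀ i = 0)
    (heq : x₀ ⬝ᵥ B *ᵥ x₀ = m * ∑ i, x₀ i ^ 2) : lamS B = m := by
  have hpos : ∀ x : ι → ℝ, x ≠ 0 → 0 < ∑ i, x i ^ 2 := fun x hx => by
    obtain ⟨i, hi⟩ := Function.ne_iff.mp hx
    exact Finset.sum_pos' (fun j _ => sq_nonneg (x j))
      ⟨i, Finset.mem_univ i, pow_two_pos_of_ne_zero hi⟩
  refine IsGreatest.csSup_eq ⟨⟨x₀, hx₀, hsum, ?_⟩, ?_⟩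
  · rw [heq, mul_div_cancel_right₀ _ (hpos x₀ hx₀).ne']
  · rintro _ ⟨x, hx, hxs, rfl⟩
    exact (div_le_iff₀ (hpos x hx)).mpr (hle x hxs)

theorem cw_eq (G : SimpleGraph ι) [DecidableRel G.Adj] (x : ι → ℝ) :
    cw G x = (msum (adjA G) - x ⬝ᵥ adjA G *ᵥ x) / 4 := by
  simp only [cw, msum, dotProduct, mulVec, Finset.mul_sum, ← Finset.sum_sub_distrib]
  congr 1
  exact Finset.sum_congr rfl fun i _ => Finset.sum_congr rfl fun j _ => by ring

theorem IsBisection.sq_eq_one {x : ι → ℝ} (hx : IsBisection x) (i : ι) : x i ^ 2 = 1 := by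
  rcases hx.1 i with h | h <;> simp [h]

theorem IsBisection.sum_sq {x : ι → ℝ} (hx : IsBisection x) :
    ∑ i, x i ^ 2 = Fintype.card ι := by
  simp [hx.sq_eq_one]

theorem IsBisection.ne_zero [Nonempty ι] {x : ι → ℝ} (hx : IsBisection x) : x ≠ 0 := by
  intro h
  obtain ⟨i⟩ := ‹Nonempty ι›
  rcases hx.1 i with hi | hi <;> simp [h] at hi

theorem gB_le_cw [DecidableEq ι] [Nonempty ι] (G : SimpleGraph ι) [DecidableRel G.Adj]
    (d : ι → ℝ) {x : ι → ℝ} (hx : IsBisection x) : gB G d ≤ cw G x := by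
  have hn : (0 : ℝ) < Fintype.card ι := by exact_mod_cast Fintype.card_pos
  have hquad : x ⬝ᵥ (adjA G + diagonal d) *ᵥ x = x ⬝ᵥ adjA G *ᵥ x + ∑ i, d i := by
    simp [dotProduct_add_diagonal_mulVec, hx.sq_eq_one]
  have hlam := le_lamS (adjA G + diagonal d) hx.ne_zero hx.2
  rw [hquad, hx.sum_sq, div_le_iff₀' hn] at hlam
  rw [gB, cw_eq, msum_add_diagonal]
  linarith

theorem hB_eq_and_bw_eq_of_gB_eq_cw [DecidableEq ι] [Nonempty ι] {G : SimpleGraph ι}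
    [DecidableRel G.Adj] {d x : ι → ℝ} (hx : IsBisection x) (h : gB G d = cw G x) :
    hB G = gB G d ∧ bw G = cw G x :=
  ⟨IsGreatest.csSup_eq ⟨⟨d, rfl⟩, by rintro _ ⟨d', rfl⟩; exact h ▸ gB_le_cw G d' hx⟩,
    IsLeast.csInf_eq ⟨⟨x, hx, rfl⟩, by rintro _ ⟨y, hy, rfl⟩; exact h ▸ gB_le_cw G d hy⟩⟩

end BoppanaBound

theorem dotProduct_mulVec_le_of_mul_eq_mul_diagonal {m n : Type*} [Fintype m] [Fintype n]
    [DecidableEq m] [DecidableEq n] {A : Matrix n n ℝ} {W : Matrix n m ℝ} {μ : m → ℝ} {c : ℝ}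
    (hc : 0 < c) (hW : W * Wᵀ = c • 1) (hAW : A * W = W * diagonal μ) {r : ℝ} (x : n → ℝ)
    (hx : ∀ s, r < μ s → (x ᵥ* W) s = 0) : x ⬝ᵥ A *ᵥ x ≤ r * (x ⬝ᵥ x) := by
  set y := x ᵥ* W
  have hform : ∀ M : Matrix m m ℝ, x ⬝ᵥ (W * M * Wᵀ) *ᵥ x = y ⬝ᵥ M *ᵥ y := fun M => by
    rw [← mulVec_mulVec, ← mulVec_mulVec, mulVec_transpose, dotProduct_mulVec]
  have hA : c * (x ⬝ᵥ A *ᵥ x) = y ⬝ᵥ diagonal μ *ᵥ y := by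
    rw [← hform, ← hAW, Matrix.mul_assoc, hW, Matrix.mul_smul, Matrix.mul_one, smul_mulVec,
      dotProduct_smul, smul_eq_mul]
  have hI : c * (x ⬝ᵥ x) = y ⬝ᵥ y := by
    have := hform 1
    rwa [Matrix.mul_one, hW, smul_mulVec, one_mulVec, one_mulVec, dotProduct_smul,
      smul_eq_mul] at this
  have hle : y ⬝ᵥ diagonal μ *ᵥ y ≤ r * (y ⬝ᵥ y) := by
    simp only [dotProduct, mulVec_diagonal, Finset.mul_sum]
    refine Finset.sum_le_sum fun s _ => ?_
    by_cases hs : r < μ s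
    · simp [y, hx s hs]
    · nlinarith [mul_self_nonneg (y s)]
  refine le_of_mul_le_mul_left ?_ hc
  calc c * (x ⬝ᵥ A *ᵥ x) = y ⬝ᵥ diagonal μ *ᵥ y := hA
    _ ≤ r * (y ⬝ᵥ y) := hle
    _ = c * (r * (x ⬝ᵥ x)) := by rw [← hI]; ring

section Hypercube

variable {k : ℕ}

def flipBit (u : Fin k → Bool) (i : Fin k) : Fin k → Bool := Function.update u i (!u i)

theorem flipBit_injective (u : Fin k → Bool) : Function.Injective (flipBit u) := by
  intro i j h
  by_contra hij
  simpa [flipBit, Function.update_of_ne hij] using congrFun h i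

theorem cube_adj_iff {u v : Fin k → Bool} : (cube k).Adj u v ↔ ∃ i, v = flipBit u i := by
  change #{i | u i ≠ v i} = 1 ↔ _
  simp only [Finset.card_eq_one, Finset.ext_iff, Finset.mem_filter, Finset.mem_univ, true_and,
    Finset.mem_singleton, funext_iff, flipBit, Function.update_apply]
  refine exists_congr fun i => forall_congr' fun j => ?_
  rcases eq_or_ne j i with rfl | hj <;> cases u j <;> cases v j <;> simp [*]

theorem adjA_cube_mulVec (f : (Fin k → Bool) → ℝ) (u : Fin k → Bool) :
    (adjA (cube k) *ᵥ f) u = ∑ i, f (flipBit u i) := by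
  have hnbr : (cube k).neighborFinset u = Finset.univ.image (flipBit u) := by
    ext v
    simp [cube_adj_iff, eq_comm]
  rw [show adjA (cube k) = (cube k).adjMatrix ℝ from rfl, SimpleGraph.adjMatrix_mulVec_apply,
    hnbr, Finset.sum_image fun i _ j _ h => flipBit_injective u h]

theorem msum_adjA_cube : msum (adjA (cube k)) = k * 2 ^ k := by
  have hrow : ∀ u, ∑ v, adjA (cube k) u v = k := fun u => by
    simpa [mulVec, dotProduct] using adjA_cube_mulVec (fun _ => 1) u
  simp [msum, hrow, mul_comm]

-- `walsh k u S = (-1) ^ |S ∩ u|`, the Walsh character `χ_S` at the vertex `u`.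
def walsh (k : ℕ) : Matrix (Fin k → Bool) (Fin k → Bool) ℝ :=
  Matrix.of fun u S => ∏ i, if S i && u i then -1 else 1

theorem walsh_comm (u S : Fin k → Bool) : walsh k u S = walsh k S u := by
  simp [walsh, and_comm]

theorem walsh_transpose : (walsh k)ᵀ = walsh k :=
  Matrix.ext fun u S => walsh_comm S u

theorem walsh_mul_walsh : walsh k * walsh k = (2 : ℝ) ^ k • 1 := by
  ext u v
  have hfactor : ∀ i, ∑ b : Bool, (if b && u i then (-1 : ℝ) else 1) * (if v i && b then -1 else 1)
      = if u i = v i then 2 else 0 := fun i => by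
    cases u i <;> cases v i <;> norm_num
  simp only [walsh, Matrix.mul_apply, Matrix.of_apply, ← Finset.prod_mul_distrib]
  rw [← Fintype.prod_sum fun i b =>
    (if b && u i then (-1 : ℝ) else 1) * (if v i && b then -1 else 1)]
  simp only [hfactor]
  by_cases huv : u = v
  · simp [huv]
  · obtain ⟨i, hi⟩ := Function.ne_iff.mp huv
    rw [Finset.prod_eq_zero (Finset.mem_univ i) (if_neg hi)]
    simp [huv]

theorem walsh_flipBit (u S : Fin k → Bool) (i : Fin k) :
    walsh k (flipBit u i) S = (if S i then -1 else 1) * walsh k u S := by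
  simp only [walsh, of_apply, flipBit]
  rw [← Finset.mul_prod_erase _ _ (Finset.mem_univ i),
    ← Finset.mul_prod_erase _ _ (Finset.mem_univ i), ← mul_assoc, Function.update_self]
  congr 1
  · cases S i <;> cases u i <;> norm_num
  · exact Finset.prod_congr rfl fun j hj => by
      rw [Function.update_of_ne (Finset.ne_of_mem_erase hj)]

theorem walsh_eq_one_or_neg_one (u S : Fin k → Bool) : walsh k u S = 1 ∨ walsh k u S = -1 := by
  simp only [walsh, of_apply]
  exact Finset.prod_induction (fun i => if S i && u i then (-1 : ℝ) else 1)
    (fun a : ℝ => a = 1 ∨ a = -1)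
    (fun a b ha hb => by rcases ha with rfl | rfl <;> rcases hb with rfl | rfl <;> norm_num)
    (Or.inl rfl) fun i _ => by split_ifs <;> simp

theorem sum_ite_neg_one_one (S : Fin k → Bool) :
    ∑ i, (if S i then (-1 : ℝ) else 1) = k - 2 * #{i | S i} := by
  have hterm : ∀ i, (if S i then (-1 : ℝ) else 1) = 1 - 2 * if S i then 1 else 0 := fun i => by
    split_ifs <;> norm_num
  rw [Finset.sum_congr rfl fun i _ => hterm i, Finset.sum_sub_distrib, ← Finset.mul_sum,
    Finset.sum_boole]
  simp

theorem adjA_cube_mulVec_walsh (S : Fin k → Bool) :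
    (adjA (cube k) *ᵥ fun u => walsh k u S) = fun u => (k - 2 * #{i | S i}) * walsh k u S := by
  ext u
  simp only [adjA_cube_mulVec, walsh_flipBit, ← Finset.sum_mul, sum_ite_neg_one_one]

theorem adjA_cube_mul_walsh :
    adjA (cube k) * walsh k = walsh k * diagonal fun S => (k - 2 * #{i | S i} : ℝ) := by
  ext u S
  rw [mul_diagonal, mul_comm, ← congrFun (adjA_cube_mulVec_walsh S) u]
  rfl

theorem walsh_false_left (u : Fin k → Bool) : walsh k (fun _ => false) u = 1 := by
  simp [walsh]

theorem sum_walsh_sq (S : Fin k → Bool) : ∑ u, walsh k u S ^ 2 = 2 ^ k := by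
  have h := congrFun (congrFun (walsh_mul_walsh (k := k)) S) S
  simpa [Matrix.mul_apply, sq, walsh_comm S] using h

theorem sum_walsh_eq_zero {S : Fin k → Bool} (hS : S ≠ fun _ => false) :
    ∑ u, walsh k u S = 0 := by
  have h := congrFun (congrFun (walsh_mul_walsh (k := k)) (fun _ => false)) S
  simpa [Matrix.mul_apply, walsh_false_left, hS.symm] using h

theorem dotProduct_adjA_cube_mulVec_le {x : (Fin k → Bool) → ℝ} (hx : ∑ u, x u = 0) :
    x ⬝ᵥ adjA (cube k) *ᵥ x ≤ (k - 2) * ∑ u, x u ^ 2 := by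
  have hW : walsh k * (walsh k)ᵀ = (2 : ℝ) ^ k • 1 := by rw [walsh_transpose, walsh_mul_walsh]
  convert dotProduct_mulVec_le_of_mul_eq_mul_diagonal (by positivity) hW adjA_cube_mul_walsh x
    fun S hS => ?_ using 2
  · simp [dotProduct, sq]
  have hS0 : S = fun _ => false := by
    have hcard : #{i | S i} < 1 := by exact_mod_cast (by linarith : (#{i | S i} : ℝ) < 1)
    rw [Nat.lt_one_iff, Finset.card_eq_zero, Finset.filter_eq_empty_iff] at hcard
    funext i
    simpa using hcard (Finset.mem_univ i)
  subst hS0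
  simpa [vecMul, dotProduct, walsh_comm _ (fun _ => false), walsh_false_left] using hx

theorem isBisection_walsh {S : Fin k → Bool} (hS : S ≠ fun _ => false) :
    IsBisection fun u => walsh k u S :=
  ⟨fun u => walsh_eq_one_or_neg_one u S, sum_walsh_eq_zero hS⟩

theorem dotProduct_adjA_cube_mulVec_walsh (S : Fin k → Bool) :
    (fun u => walsh k u S) ⬝ᵥ adjA (cube k) *ᵥ (fun u => walsh k u S)
      = (k - 2 * #{i | S i}) * 2 ^ k := by
  rw [adjA_cube_mulVec_walsh, ← sum_walsh_sq S, Finset.mul_sum]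
  exact Finset.sum_congr rfl fun u _ => by ring

theorem exists_card_filter_eq_one (hk : 1 ≤ k) : ∃ S : Fin k → Bool, #{i | S i} = 1 :=
  ⟨fun j => decide (j = ⟨0, hk⟩), by simp [Finset.filter_eq']⟩

theorem ne_false_of_card_filter_eq_one {S : Fin k → Bool} (hS : #{i | S i} = 1) :
    S ≠ fun _ => false := by
  rintro rfl
  simp at hS

theorem cw_cube_walsh {S : Fin k → Bool} (hS : #{i | S i} = 1) :
    cw (cube k) (fun u => walsh k u S) = 2 ^ k / 2 := by
  rw [cw_eq, msum_adjA_cube, dotProduct_adjA_cube_mulVec_walsh, hS]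
  ring

theorem lamS_adjA_cube_add_const (hk : 1 ≤ k) :
    lamS (adjA (cube k) + diagonal fun _ => 2 - (k : ℝ)) = 0 := by
  obtain ⟨S, hS⟩ := exists_card_filter_eq_one hk
  have hbis := isBisection_walsh (ne_false_of_card_filter_eq_one hS)
  refine lamS_eq_of_forall_le (fun x hx => ?_) hbis.ne_zero hbis.2 ?_
  · rw [dotProduct_add_diagonal_mulVec, ← Finset.mul_sum]
    linarith [dotProduct_adjA_cube_mulVec_le hx]
  · rw [dotProduct_add_diagonal_mulVec, ← Finset.mul_sum, dotProduct_adjA_cube_mulVec_walsh,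
      sum_walsh_sq, hS]
    ring

theorem gB_cube_const (hk : 1 ≤ k) : gB (cube k) (fun _ => 2 - (k : ℝ)) = 2 ^ k / 2 := by
  have hsum : ∑ _u : Fin k → Bool, (2 - (k : ℝ)) = 2 ^ k * (2 - k) := by simp [mul_sub]
  rw [gB, msum_add_diagonal, msum_adjA_cube, lamS_adjA_cube_add_const hk, hsum]
  simp only [Fintype.card_fun, Fintype.card_bool, Fintype.card_fin]
  ring

end Hypercube

/-- for the `k`-dimensional hypercube `H` on `n = 2^k` vertices,
`g(H, (2-k)·𝟙) = n/2`, `h(H) = n/2`, and `bw(H) = n/2`; in particular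
`h(H) = bw(H)`. -/
theorem hypercube_h_eq_bw (k : ℕ) (hk : 1 ≤ k) :
    gB (cube k) (fun _ => (2 : ℝ) - (k : ℝ)) = (2 : ℝ) ^ k / 2 ∧
    hB (cube k) = (2 : ℝ) ^ k / 2 ∧
    bw (cube k) = (2 : ℝ) ^ k / 2 ∧
    hB (cube k) = bw (cube k) := by
  obtain ⟨S, hS⟩ := exists_card_filter_eq_one hk
  have hgB := gB_cube_const hk
  have hcw := cw_cube_walsh hS
  have hbis := isBisection_walsh (ne_false_of_card_filter_eq_one hS)
  obtain ⟨hB_eq, bw_eq⟩ := hB_eq_and_bw_eq_of_gB_eq_cw hbis (hgB.trans hcw.symm)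
  rw [hgB] at hB_eq
  rw [hcw] at bw_eq
  exact ⟨hgB, hB_eq, bw_eq, hB_eq.trans bw_eq.symm⟩
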